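/- In a weighted binary tree where each sibling pair differs in weight by at most P_max + 2, any node Y at depth d_Y with P_Y > P_max + 2 satisfies d_Y ≤ log₂ P_G + log₂(1 − (P_max+2)/P_G) − log₂(P_Y − P_max − 2), where P_G is the root weight. -/
import Mathlib


open Real

/-- A finite binary tree with real weights at the leaves. -/
inductive BTree where
  | leaf : ℝ → BTree
  | node : BTree → BTree → BTree

namespace BTree

/-- The weight of a node: a leaf's weight, or the sum of the children's weights. -/
def wt : BTree → ℝ
  | leaf w => w
  | node l r => l.wt + r.wt

/-- All leaf weights are positive. -/
def PosLeaves : BTree → Prop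
  | leaf w => 0 < w
  | node l r => l.PosLeaves ∧ r.PosLeaves

/-- Every pair of sibling nodes has weights differing by at most `c`. -/
def SibBound (c : ℝ) : BTree → Prop
  | leaf _ => True
  | node l r => |l.wt - r.wt| ≤ c ∧ l.SibBound c ∧ r.SibBound c

/-- `SubtreeAt t d s` : `s` occurs as a subtree (node) of `t` at depth `d`
(number of edges from the root of `t`). -/
inductive SubtreeAt : BTree → ℕ → BTree → Prop
  | refl (t : BTree) : SubtreeAt t 0 t
  | left {l r s : BTree} {d : ℕ} : SubtreeAt l d s → SubtreeAt (node l r) (d + 1) s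
  | right {l r s : BTree} {d : ℕ} : SubtreeAt r d s → SubtreeAt (node l r) (d + 1) s

end BTree

lemma pos_wt : ∀ t : BTree, t.PosLeaves → 0 < t.wt := by
  intro t
  induction t with
  | leaf w => intro h; exact h
  | node l r ihl ihr =>
    intro h
    exact add_pos (ihl h.1) (ihr h.2)

lemma key_halving (c : ℝ) {t : BTree} {d : ℕ} {s : BTree}
    (h : BTree.SubtreeAt t d s) (hs : t.SibBound c) :
    2 ^ d * (s.wt - c) ≤ t.wt - c := by
  induction h with
  | refl t => simp
  | @left l r s d h ih =>
    obtain ⟨hb, hl, hr⟩ := hs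
    have h1 := ih hl
    have h2 : l.wt - c ≤ r.wt := by
      have := abs_le.mp hb
      linarith [this.1]
    have : (BTree.node l r).wt - c = l.wt + r.wt - c := rfl
    rw [this, pow_succ]
    nlinarith
  | @right l r s d h ih =>
    obtain ⟨hb, hl, hr⟩ := hs
    have h1 := ih hr
    have h2 : r.wt - c ≤ l.wt := by
      have := abs_le.mp hb
      linarith [this.2]
    have : (BTree.node l r).wt - c = l.wt + r.wt - c := rfl
    rw [this, pow_succ]
    nlinarith

theorem depth_upper_bound_extended (Pmax : ℝ) (t0 : BTree)
    (hpos : t0.PosLeaves) (hsib : t0.SibBound (Pmax + 2))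
    (Y : BTree) (dY : ℕ) (hsub : BTree.SubtreeAt t0 dY Y)
    (hY : Y.wt > Pmax + 2) (hG : t0.wt > Pmax + 2) :
    (dY : ℝ) ≤ Real.logb 2 t0.wt + Real.logb 2 (1 - (Pmax + 2) / t0.wt)
      - Real.logb 2 (Y.wt - Pmax - 2) := by
  set c := Pmax + 2 with hc
  have hG0 : 0 < t0.wt := pos_wt t0 hpos
  have hYc : 0 < Y.wt - c := by linarith
  have hGc : 0 < t0.wt - c := by linarith
  have hkey := key_halving c hsub hsib
  have hpow : (0:ℝ) < 2 ^ dY * (Y.wt - c) := by positivity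
  have hlog : Real.logb 2 (2 ^ dY * (Y.wt - c)) ≤ Real.logb 2 (t0.wt - c) :=
    Real.logb_le_logb_of_le (by norm_num) hpow hkey
  rw [Real.logb_mul (by positivity) (ne_of_gt hYc)] at hlog
  have hp2 : Real.logb 2 ((2:ℝ) ^ dY) = (dY : ℝ) := by
    rw [Real.logb_pow]
    simp
  rw [hp2] at hlog
  have hfac : t0.wt - c = t0.wt * (1 - c / t0.wt) := by
    field_simp
  have h1c : 0 < 1 - c / t0.wt := by
    rw [sub_pos, div_lt_one hG0]; exact hG
  rw [hfac, Real.logb_mul (ne_of_gt hG0) (ne_of_gt h1c)] at hlog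
  have : Y.wt - Pmax - 2 = Y.wt - c := by rw [hc]; ring
  rw [this]
  linarith
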